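/- (Policy improvement) In a finite MDP with discount factor γ ∈ [0,1), if π is any policy and π' is a deterministic policy that is greedy with respect to q_π, i.e. π'(s) ∈ argmax_a q_π(s,a) for all s, then v_{π'}(s) ≥ v_π(s) for every state s; moreover, if v_{π'} = v_π then v_π satisfies the Bellman optimality equation and π is optimal. -/

import Mathlib

open Finset

/-- A (stationary stochastic) policy on a finite action set: for each state `s`,
`prob s` is a probability distribution over actions. -/
structure Policy (S A : Type*) [Fintype A] where
  prob : S → A → ℝ
  nonneg : ∀ s a, 0 ≤ prob s a
  sum_one : ∀ s, ∑ a : A, prob s a = 1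

/-- A finite Markov decision process: finite state set `S`, finite action set `A`,
finite reward-label set `R` whose real value is given by `val`, and dynamics
`p s a s' r = p(s', r | s, a)`. -/
structure FinMDP (S A R : Type*) [Fintype S] [Fintype A] [Fintype R] where
  p : S → A → S → R → ℝ
  val : R → ℝ
  p_nonneg : ∀ s a s' r, 0 ≤ p s a s' r
  p_sum_one : ∀ s a, (∑ s' : S, ∑ r : R, p s a s' r) = 1

variable {S A R : Type*} [Fintype S] [Fintype A] [Fintype R]

/-- `qStep M π k s a` is the expected reward received at time `k+1` when starting
in state `s`, taking action `a`, and thereafter following the policy `π`. -/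
noncomputable def qStep (M : FinMDP S A R) (π : Policy S A) : ℕ → S → A → ℝ
  | 0 => fun s a => ∑ s' : S, ∑ r : R, M.p s a s' r * M.val r
  | (k + 1) => fun s a => ∑ s' : S, ∑ r : R, M.p s a s' r *
      ∑ a' : A, π.prob s' a' * qStep M π k s' a'

/-- `vStep M π k s` is the expected reward received at time `k+1` when starting
in state `s` and following the policy `π`. -/
noncomputable def vStep (M : FinMDP S A R) (π : Policy S A) (k : ℕ) (s : S) : ℝ :=
  ∑ a : A, π.prob s a * qStep M π k s a

/-- The action-value function `q_π(s,a)`: the expected discounted return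
`E_π[∑_k γ^k R_{t+k+1} | S_t = s, A_t = a]`. -/
noncomputable def qval (M : FinMDP S A R) (γ : ℝ) (π : Policy S A) (s : S) (a : A) : ℝ :=
  ∑' k : ℕ, γ ^ k * qStep M π k s a

/-- The state-value function `v_π(s)`: the expected discounted return
`E_π[∑_k γ^k R_{t+k+1} | S_t = s]`. -/
noncomputable def vval (M : FinMDP S A R) (γ : ℝ) (π : Policy S A) (s : S) : ℝ :=
  ∑' k : ℕ, γ ^ k * vStep M π k s

/-- The optimal state-value function `v*(s) = max_π v_π(s)`. -/
noncomputable def vStar (M : FinMDP S A R) (γ : ℝ) (s : S) : ℝ :=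
  ⨆ π : Policy S A, vval M γ π s

/-- The optimal action-value function `q*(s,a) = max_π q_π(s,a)`. -/
noncomputable def qStar (M : FinMDP S A R) (γ : ℝ) (s : S) (a : A) : ℝ :=
  ⨆ π : Policy S A, qval M γ π s a

/-- The deterministic policy selecting action `d s` in state `s` (as a point-mass
stochastic policy). -/
noncomputable def detPolicy [DecidableEq A] (d : S → A) : Policy S A where
  prob s a := if a = d s then 1 else 0
  nonneg s a := by (try dsimp only); split <;> norm_num
  sum_one s := by simp

section AuxPI

variable (M : FinMDP S A R) (π : Policy S A)

/-- Uniform bound on rewards. -/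
noncomputable def Cb (M : FinMDP S A R) : ℝ := ∑ r : R, |M.val r|

lemma psum_le_one (s : S) (a : A) (r : R) : ∑ s' : S, M.p s a s' r ≤ 1 := by
  rw [← M.p_sum_one s a]
  exact Finset.sum_le_sum fun s' _ =>
    Finset.single_le_sum (fun r' _ => M.p_nonneg s a s' r') (Finset.mem_univ r)

lemma abs_qStep_le : ∀ (k : ℕ) (s : S) (a : A), |qStep M π k s a| ≤ Cb M := by
  intro k
  induction k with
  | zero =>
    intro s a
    calc |qStep M π 0 s a| ≤ ∑ s' : S, ∑ r : R, |M.p s a s' r * M.val r| :=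
          (Finset.abs_sum_le_sum_abs _ _).trans
            (Finset.sum_le_sum fun s' _ => Finset.abs_sum_le_sum_abs _ _)
      _ = ∑ r : R, (∑ s' : S, M.p s a s' r) * |M.val r| := by
          rw [Finset.sum_comm]
          refine Finset.sum_congr rfl fun r _ => ?_
          rw [Finset.sum_mul]
          refine Finset.sum_congr rfl fun s' _ => ?_
          rw [abs_mul, abs_of_nonneg (M.p_nonneg s a s' r)]
      _ ≤ ∑ r : R, 1 * |M.val r| := Finset.sum_le_sum fun r _ =>
            mul_le_mul_of_nonneg_right (psum_le_one M s a r) (abs_nonneg _)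
      _ = Cb M := by simp [Cb]
  | succ k ih =>
    intro s a
    have hv : ∀ s' : S, |∑ a' : A, π.prob s' a' * qStep M π k s' a'| ≤ Cb M := by
      intro s'
      calc |∑ a' : A, π.prob s' a' * qStep M π k s' a'|
          ≤ ∑ a' : A, |π.prob s' a' * qStep M π k s' a'| := Finset.abs_sum_le_sum_abs _ _
        _ ≤ ∑ a' : A, π.prob s' a' * Cb M := Finset.sum_le_sum fun a' _ => by
            rw [abs_mul, abs_of_nonneg (π.nonneg s' a')]
            exact mul_le_mul_of_nonneg_left (ih s' a') (π.nonneg s' a')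
        _ = Cb M := by rw [← Finset.sum_mul, π.sum_one, one_mul]
    calc |qStep M π (k+1) s a|
        ≤ ∑ s' : S, ∑ r : R, |M.p s a s' r * ∑ a' : A, π.prob s' a' * qStep M π k s' a'| :=
          (Finset.abs_sum_le_sum_abs _ _).trans
            (Finset.sum_le_sum fun s' _ => Finset.abs_sum_le_sum_abs _ _)
      _ ≤ ∑ s' : S, ∑ r : R, M.p s a s' r * Cb M := by
          refine Finset.sum_le_sum fun s' _ => Finset.sum_le_sum fun r _ => ?_
          rw [abs_mul, abs_of_nonneg (M.p_nonneg s a s' r)]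
          exact mul_le_mul_of_nonneg_left (hv s') (M.p_nonneg s a s' r)
      _ = Cb M := by
          simp only [← Finset.sum_mul]
          rw [M.p_sum_one, one_mul]

lemma abs_vStep_le (k : ℕ) (s : S) : |vStep M π k s| ≤ Cb M := by
  calc |vStep M π k s|
      ≤ ∑ a : A, |π.prob s a * qStep M π k s a| := Finset.abs_sum_le_sum_abs _ _
    _ ≤ ∑ a : A, π.prob s a * Cb M := Finset.sum_le_sum fun a _ => by
        rw [abs_mul, abs_of_nonneg (π.nonneg s a)]
        exact mul_le_mul_of_nonneg_left (abs_qStep_le M π k s a) (π.nonneg s a)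
    _ = Cb M := by rw [← Finset.sum_mul, π.sum_one, one_mul]

variable {γ : ℝ}

lemma summable_qSeries (hγ0 : 0 ≤ γ) (hγ1 : γ < 1) (s : S) (a : A) :
    Summable (fun k : ℕ => γ ^ k * qStep M π k s a) := by
  refine Summable.of_norm_bounded
    ((summable_geometric_of_lt_one hγ0 hγ1).mul_left (Cb M)) fun k => ?_
  rw [Real.norm_eq_abs, abs_mul, abs_pow, abs_of_nonneg hγ0, mul_comm]
  exact mul_le_mul_of_nonneg_right (abs_qStep_le M π k s a) (pow_nonneg hγ0 k)

lemma summable_vSeries (hγ0 : 0 ≤ γ) (hγ1 : γ < 1) (s : S) :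
    Summable (fun k : ℕ => γ ^ k * vStep M π k s) := by
  refine Summable.of_norm_bounded
    ((summable_geometric_of_lt_one hγ0 hγ1).mul_left (Cb M)) fun k => ?_
  rw [Real.norm_eq_abs, abs_mul, abs_pow, abs_of_nonneg hγ0, mul_comm]
  exact mul_le_mul_of_nonneg_right (abs_vStep_le M π k s) (pow_nonneg hγ0 k)

lemma vval_eq_sum_q (hγ0 : 0 ≤ γ) (hγ1 : γ < 1) (s : S) :
    vval M γ π s = ∑ a : A, π.prob s a * qval M γ π s a := by
  have h1 : ∀ k : ℕ, γ ^ k * vStep M π k s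
      = ∑ a : A, π.prob s a * (γ ^ k * qStep M π k s a) := by
    intro k
    rw [vStep, Finset.mul_sum]
    exact Finset.sum_congr rfl fun a _ => by ring
  rw [vval]
  simp_rw [h1]
  rw [Summable.tsum_finsetSum (fun a _ => (summable_qSeries M π hγ0 hγ1 s a).mul_left _)]
  exact Finset.sum_congr rfl fun a _ => tsum_mul_left

lemma qval_bellman (hγ0 : 0 ≤ γ) (hγ1 : γ < 1) (s : S) (a : A) :
    qval M γ π s a = ∑ s' : S, ∑ r : R, M.p s a s' r * (M.val r + γ * vval M γ π s') := by
  have hsum := summable_qSeries M π hγ0 hγ1 s a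
  rw [qval, Summable.tsum_eq_zero_add hsum]
  have h1 : ∀ k : ℕ, γ ^ (k + 1) * qStep M π (k + 1) s a
      = ∑ s' : S, ∑ r : R, M.p s a s' r * (γ * (γ ^ k * vStep M π k s')) := by
    intro k
    show γ ^ (k + 1) * (∑ s' : S, ∑ r : R, M.p s a s' r * vStep M π k s') = _
    rw [Finset.mul_sum]
    refine Finset.sum_congr rfl fun s' _ => ?_
    rw [Finset.mul_sum]
    refine Finset.sum_congr rfl fun r _ => ?_
    ring
  simp_rw [h1]
  rw [Summable.tsum_finsetSum (fun s' _ => summable_sum fun r _ =>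
    (((summable_vSeries M π hγ0 hγ1 s').mul_left γ).mul_left _))]
  have h2 : ∀ s' : S, (∑' k : ℕ, ∑ r : R, M.p s a s' r * (γ * (γ ^ k * vStep M π k s')))
      = ∑ r : R, M.p s a s' r * (γ * vval M γ π s') := by
    intro s'
    rw [Summable.tsum_finsetSum (fun r _ => ((summable_vSeries M π hγ0 hγ1 s').mul_left γ).mul_left _)]
    refine Finset.sum_congr rfl fun r _ => ?_
    rw [tsum_mul_left, tsum_mul_left]
    rfl
  simp_rw [h2]
  have h0 : γ ^ 0 * qStep M π 0 s a = ∑ s' : S, ∑ r : R, M.p s a s' r * M.val r := by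
    rw [pow_zero, one_mul]; rfl
  rw [h0, ← Finset.sum_add_distrib]
  refine Finset.sum_congr rfl fun s' _ => ?_
  rw [← Finset.sum_add_distrib]
  exact Finset.sum_congr rfl fun r _ => by ring

lemma vval_det [DecidableEq A] (hγ0 : 0 ≤ γ) (hγ1 : γ < 1) (d : S → A) (s : S) :
    vval M γ (detPolicy d) s = qval M γ (detPolicy d) s (d s) := by
  rw [vval_eq_sum_q M (detPolicy d) hγ0 hγ1 s]
  simp [detPolicy]

/-- Contraction-style maximum argument. -/
lemma max_contraction (hγ0 : 0 ≤ γ) (hγ1 : γ < 1) (f : S → ℝ)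
    (h : ∀ s : S, ∃ w : S → ℝ, (∀ t, 0 ≤ w t) ∧ (∑ t : S, w t) = 1 ∧
      f s ≤ γ * ∑ t : S, w t * f t) :
    ∀ s : S, f s ≤ 0 := by
  intro s
  have hne : (Finset.univ : Finset S).Nonempty := ⟨s, Finset.mem_univ s⟩
  obtain ⟨s₀, -, hmax⟩ := Finset.exists_max_image Finset.univ f hne
  obtain ⟨w, hw0, hw1, hle⟩ := h s₀
  have h2 : f s₀ ≤ γ * f s₀ := by
    refine hle.trans ?_
    have : ∑ t : S, w t * f t ≤ ∑ t : S, w t * f s₀ :=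
      Finset.sum_le_sum fun t _ =>
        mul_le_mul_of_nonneg_left (hmax t (Finset.mem_univ t)) (hw0 t)
    calc γ * ∑ t : S, w t * f t ≤ γ * ∑ t : S, w t * f s₀ :=
          mul_le_mul_of_nonneg_left this hγ0
      _ = γ * f s₀ := by rw [← Finset.sum_mul, hw1, one_mul]
  have hs0 : f s₀ ≤ 0 := by nlinarith
  exact (hmax s (Finset.mem_univ s)).trans hs0

end AuxPI

/-- Policy improvement: if `π'` is a deterministic policy greedy with respect to
`q_π`, i.e. `π'(s) ∈ argmax_a q_π(s,a)` for all `s`, then `v_{π'}(s) ≥ v_π(s)` for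
every state `s`; moreover, if `v_{π'} = v_π` then `v_π` satisfies the Bellman
optimality equation and `π` is optimal. -/
theorem policy_improvement [Nonempty A] [DecidableEq A]
    (M : FinMDP S A R) (γ : ℝ) (hγ0 : 0 ≤ γ) (hγ1 : γ < 1)
    (π : Policy S A) (d : S → A)
    (hgreedy : ∀ (s : S) (a : A), qval M γ π s a ≤ qval M γ π s (d s)) :
    (∀ s : S, vval M γ π s ≤ vval M γ (detPolicy d) s) ∧
    ((∀ s : S, vval M γ (detPolicy d) s = vval M γ π s) →
      (∀ s : S, vval M γ π s =
        ⨆ a : A, ∑ s' : S, ∑ r : R, M.p s a s' r * (M.val r + γ * vval M γ π s')) ∧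
      (∀ s : S, vval M γ π s = vStar M γ s)) := by
  set ν := detPolicy d with hν
  have hvq : ∀ s : S, vval M γ π s ≤ qval M γ π s (d s) := by
    intro s
    rw [vval_eq_sum_q M π hγ0 hγ1 s]
    calc ∑ a : A, π.prob s a * qval M γ π s a
        ≤ ∑ a : A, π.prob s a * qval M γ π s (d s) :=
          Finset.sum_le_sum fun a _ =>
            mul_le_mul_of_nonneg_left (hgreedy s a) (π.nonneg s a)
      _ = qval M γ π s (d s) := by rw [← Finset.sum_mul, π.sum_one, one_mul]
  have hdiff : ∀ (x y : S → ℝ) (s : S) (a : A),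
      (∑ s' : S, ∑ r : R, M.p s a s' r * (M.val r + γ * x s')) -
      (∑ s' : S, ∑ r : R, M.p s a s' r * (M.val r + γ * y s'))
      = γ * ∑ s' : S, (∑ r : R, M.p s a s' r) * (x s' - y s') := by
    intro x y s a
    rw [← Finset.sum_sub_distrib, Finset.mul_sum]
    refine Finset.sum_congr rfl fun s' _ => ?_
    rw [← Finset.sum_sub_distrib, Finset.sum_mul, Finset.mul_sum]
    exact Finset.sum_congr rfl fun r _ => by ring
  have part1 : ∀ s : S, vval M γ π s ≤ vval M γ ν s := by
    have key := max_contraction hγ0 hγ1 (fun t => vval M γ π t - vval M γ ν t) ?_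
    · intro s
      have := key s
      linarith
    · intro s
      refine ⟨fun t => ∑ r : R, M.p s (d s) t r,
        fun t => Finset.sum_nonneg fun r _ => M.p_nonneg _ _ _ _, M.p_sum_one s (d s), ?_⟩
      have h1 : vval M γ π s
          ≤ ∑ s' : S, ∑ r : R, M.p s (d s) s' r * (M.val r + γ * vval M γ π s') :=
        (hvq s).trans_eq (qval_bellman M π hγ0 hγ1 s (d s))
      have h2 : vval M γ ν s
          = ∑ s' : S, ∑ r : R, M.p s (d s) s' r * (M.val r + γ * vval M γ ν s') := by
        rw [hν, vval_det M hγ0 hγ1 d s, qval_bellman M (detPolicy d) hγ0 hγ1 s (d s)]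
      have h3 := hdiff (vval M γ π) (vval M γ ν) s (d s)
      simp only []
      linarith
  refine ⟨part1, fun heq => ?_⟩
  have hqd : ∀ s : S, qval M γ π s (d s) = vval M γ π s := by
    intro s
    rw [qval_bellman M π hγ0 hγ1 s (d s), ← heq s, hν, vval_det M hγ0 hγ1 d s,
      qval_bellman M (detPolicy d) hγ0 hγ1 s (d s)]
    refine Finset.sum_congr rfl fun s' _ => Finset.sum_congr rfl fun r _ => ?_
    rw [← hν, heq s']
  have hq : ∀ (s : S) (a : A), qval M γ π s a ≤ vval M γ π s :=
    fun s a => (hgreedy s a).trans (hqd s).le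
  have hall : ∀ (μ : Policy S A) (s : S), vval M γ μ s ≤ vval M γ π s := by
    intro μ
    have key := max_contraction hγ0 hγ1 (fun t => vval M γ μ t - vval M γ π t) ?_
    · intro s
      have := key s
      linarith
    · intro s
      refine ⟨fun t => ∑ a : A, μ.prob s a * ∑ r : R, M.p s a t r,
        fun t => Finset.sum_nonneg fun a _ => mul_nonneg (μ.nonneg s a)
          (Finset.sum_nonneg fun r _ => M.p_nonneg _ _ _ _), ?_, ?_⟩
      · rw [Finset.sum_comm]
        simp_rw [← Finset.mul_sum]
        have : ∀ a : A, μ.prob s a * (∑ t : S, ∑ r : R, M.p s a t r) = μ.prob s a := by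
          intro a; rw [M.p_sum_one, mul_one]
        simp_rw [this]
        exact μ.sum_one s
      · have e1 : vval M γ μ s = ∑ a : A, μ.prob s a * qval M γ μ s a :=
          vval_eq_sum_q M μ hγ0 hγ1 s
        have e2 : ∑ a : A, μ.prob s a * qval M γ π s a ≤ vval M γ π s := by
          calc ∑ a : A, μ.prob s a * qval M γ π s a
              ≤ ∑ a : A, μ.prob s a * vval M γ π s := Finset.sum_le_sum fun a _ =>
                mul_le_mul_of_nonneg_left (hq s a) (μ.nonneg s a)
            _ = vval M γ π s := by rw [← Finset.sum_mul, μ.sum_one, one_mul]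
        have e3 : ∀ a : A, qval M γ μ s a - qval M γ π s a
            = γ * ∑ s' : S, (∑ r : R, M.p s a s' r) * (vval M γ μ s' - vval M γ π s') := by
          intro a
          rw [qval_bellman M μ hγ0 hγ1 s a, qval_bellman M π hγ0 hγ1 s a]
          exact hdiff _ _ s a
        have e4 : ∑ a : A, μ.prob s a * (qval M γ μ s a - qval M γ π s a)
            = γ * ∑ t : S, (∑ a : A, μ.prob s a * ∑ r : R, M.p s a t r) *
                (vval M γ μ t - vval M γ π t) := by
          simp_rw [e3, Finset.mul_sum, Finset.sum_mul, Finset.mul_sum]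
          rw [Finset.sum_comm]
          exact Finset.sum_congr rfl fun t _ => Finset.sum_congr rfl fun a _ =>
            Finset.sum_congr rfl fun r _ => by ring
        have e5 : ∑ a : A, μ.prob s a * (qval M γ μ s a - qval M γ π s a)
            = (∑ a : A, μ.prob s a * qval M γ μ s a)
              - ∑ a : A, μ.prob s a * qval M γ π s a := by
          rw [← Finset.sum_sub_distrib]
          exact Finset.sum_congr rfl fun a _ => by ring
        simp only []
        linarith [e4, e5, e2, e1.le, e1.ge]
  constructor
  · intro s
    have hrw : (⨆ a : A, ∑ s' : S, ∑ r : R, M.p s a s' r * (M.val r + γ * vval M γ π s'))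
        = ⨆ a : A, qval M γ π s a :=
      iSup_congr fun a => (qval_bellman M π hγ0 hγ1 s a).symm
    rw [hrw]
    refine le_antisymm ?_ (ciSup_le fun a => hq s a)
    rw [← hqd s]
    exact le_ciSup (Set.Finite.bddAbove (Set.finite_range _)) (d s)
  · intro s
    haveI : Nonempty (Policy S A) := ⟨π⟩
    have hbdd : BddAbove (Set.range fun μ : Policy S A => vval M γ μ s) := by
      refine ⟨vval M γ π s, ?_⟩
      rintro x ⟨μ, rfl⟩
      exact hall μ s
    rw [vStar]
    exact le_antisymm (le_ciSup hbdd π) (ciSup_le fun μ => hall μ s)
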